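/- Let p, q be relatively prime positive integers and A(t), B(t) polynomials with nonnegative integer coefficients and nonzero constant terms satisfying A(t)·ξ_q(t) = B(t)·ξ_p(t). Let λ (from the top terms of A in the decomposition by exponents aq - bp, 0 ≤ a < p) and μ (from the top terms of B in the decomposition by exponents ap - bq, 0 ≤ a < q) be the resulting partitions. Then λ and μ are dual (conjugate) partitions, i.e., μ_i = #{j : λ_j > i} for all i ≥ 0. -/

import Mathlib

/-!
Let `F` be the coefficient sequence of `A / (1 - t^p) = B / (1 - t^q)` (multiply the hypothesis by
`1 - t`), so `F n = ∑ₖ A_{n - kp} = ∑ₖ B_{n - kq}`. Since the coefficients are nonnegative, along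
the line `aq - bp` (resp. `ap - bq`) `F` is positive exactly for `b ≤ λ` (resp. `b ≤ μ`). For
`a = p - 1 - j` and `a' = q - 1 - i` the points `aq - (i + 1)p` and `a'p - (j + 1)q` coincide, so
`i < λ_j ↔ j < μ_i`, which is conjugacy.
-/

open Polynomial

noncomputable def xi (d : ℕ) : Polynomial ℤ := ∑ k ∈ Finset.range d, X ^ k

def coeffZ (P : Polynomial ℤ) (j : ℤ) : ℤ := if 0 ≤ j then P.coeff j.toNat else 0

lemma coeffZ_of_neg (P : ℤ[X]) {j : ℤ} (hj : j < 0) : coeffZ P j = 0 := by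
  simp [coeffZ, not_le.mpr hj]

lemma coeffZ_nonneg {P : ℤ[X]} (hP : ∀ n, 0 ≤ P.coeff n) (j : ℤ) : 0 ≤ coeffZ P j := by
  unfold coeffZ
  split_ifs
  exacts [hP _, le_rfl]

lemma coeffZ_sub (P Q : ℤ[X]) (j : ℤ) : coeffZ (P - Q) j = coeffZ P j - coeffZ Q j := by
  unfold coeffZ
  split_ifs <;> simp

lemma coeffZ_mul_X_pow (P : ℤ[X]) (d : ℕ) (j : ℤ) : coeffZ (P * X ^ d) j = coeffZ P (j - d) := by
  unfold coeffZ
  rw [coeff_mul_X_pow']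
  split_ifs <;> first | omega | congr 1; omega

lemma lt_of_coeffZ_ne_zero {P : ℤ[X]} {p q a : ℕ} {b : ℤ} (hq : 0 < q) (ha : a < p)
    (h : coeffZ P (a * q - b * p) ≠ 0) : b < q := by
  have hnonneg : 0 ≤ (a : ℤ) * q - b * p := by
    by_contra hneg
    exact h (coeffZ_of_neg P (not_le.mp hneg))
  have : (a : ℤ) * q < p * q := by gcongr
  nlinarith

def strideSum (c : ℤ → ℤ) (d : ℕ) (n : ℤ) : ℤ :=
  ∑ k ∈ Finset.range (n.toNat + 1), c (n - k * d)

section strideSum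

variable {c c' : ℤ → ℤ} {d : ℕ}

lemma sum_range_eq_strideSum (hc : ∀ m < 0, c m = 0) (hd : 0 < d) {n : ℤ} {K : ℕ}
    (hK : n.toNat < K) : ∑ k ∈ Finset.range K, c (n - k * d) = strideSum c d n := by
  refine (Finset.sum_subset (by intro k; simp only [Finset.mem_range]; omega) ?_).symm
  intro k hkK hkn
  simp only [Finset.mem_range] at hkK hkn
  apply hc
  have : (k : ℤ) ≤ k * d := le_mul_of_one_le_right (by positivity) (by exact_mod_cast hd)
  omega

lemma strideSum_sub (n : ℤ) :
    strideSum (fun m => c m - c' m) d n = strideSum c d n - strideSum c' d n :=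
  Finset.sum_sub_distrib ..

lemma strideSum_comp_sub (hc : ∀ m < 0, c m = 0) (hd : 0 < d) (e : ℕ) (n : ℤ) :
    strideSum (fun m => c (m - e)) d n = strideSum c d (n - e) := by
  rw [← sum_range_eq_strideSum hc hd (K := n.toNat + 1) (by omega), strideSum]
  exact Finset.sum_congr rfl fun k _ => by ring_nf

lemma strideSum_sub_strideSum (hc : ∀ m < 0, c m = 0) (hd : 0 < d) (n : ℤ) :
    strideSum c d n - strideSum c d (n - d) = c n := by
  have hlast : c (n - (n.toNat + 1 : ℕ) * d) = 0 := by
    apply hc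
    have : ((n.toNat + 1 : ℕ) : ℤ) ≤ (n.toNat + 1 : ℕ) * d :=
      le_mul_of_one_le_right (by positivity) (by exact_mod_cast hd)
    omega
  rw [← sum_range_eq_strideSum hc hd (n := n - d) (K := n.toNat + 1) (by omega), strideSum,
    ← Finset.sum_sub_distrib]
  convert Finset.sum_range_sub' (fun k : ℕ => c (n - k * d)) (n.toNat + 1) using 2 with k
  · push_cast; ring_nf
  · rw [hlast, Nat.cast_zero, zero_mul, sub_zero, sub_zero]

lemma strideSum_of_neg (hc : ∀ m < 0, c m = 0) {n : ℤ} (hn : n < 0) : strideSum c d n = 0 :=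
  Finset.sum_eq_zero fun k _ => hc _ (by nlinarith [(k * d : ℕ).cast_nonneg (α := ℤ)])

lemma eq_strideSum_of_sub_eq {f : ℤ → ℤ} (hf : ∀ n < 0, f n = 0) (hd : 0 < d)
    (hstep : ∀ n, f n - f (n - d) = c n) : f = strideSum c d := by
  have hc (m : ℤ) (hm : m < 0) : c m = 0 := by
    rw [← hstep, hf m hm, hf _ (by omega), sub_zero]
  have hdiff (K : ℕ) (n : ℤ) :
      f n - strideSum c d n = f (n - K * d) - strideSum c d (n - K * d) := by
    induction K with
    | zero => simp
    | succ K ih =>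
      have hS := strideSum_sub_strideSum hc hd (n - K * d)
      have hf := hstep (n - K * d)
      rw [ih, Nat.cast_succ, add_mul, one_mul, ← sub_sub]
      linarith
  funext n
  have hneg : n - (n.toNat + 1 : ℕ) * d < 0 := by
    have : ((n.toNat + 1 : ℕ) : ℤ) ≤ (n.toNat + 1 : ℕ) * d :=
      le_mul_of_one_le_right (by positivity) (by exact_mod_cast hd)
    omega
  have := hdiff (n.toNat + 1) n
  rw [hf _ hneg, strideSum_of_neg hc hneg] at this
  linarith

lemma strideSum_pos_iff (hc : ∀ m < 0, c m = 0) (hc0 : ∀ m, 0 ≤ c m) (hd : 0 < d) (n : ℤ) :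
    0 < strideSum c d n ↔ ∃ k : ℕ, c (n - k * d) ≠ 0 := by
  constructor
  · intro hpos
    obtain ⟨k, -, hk⟩ := Finset.exists_ne_zero_of_sum_ne_zero hpos.ne'
    exact ⟨k, hk⟩
  · rintro ⟨k, hk⟩
    have hk_mem : k ∈ Finset.range (n.toNat + 1) := by
      have : 0 ≤ n - k * d := by
        by_contra hneg
        exact hk (hc _ (not_le.mp hneg))
      have : (k : ℤ) ≤ k * d := le_mul_of_one_le_right (by positivity) (by exact_mod_cast hd)
      rw [Finset.mem_range]
      omega
    exact (lt_of_le_of_ne (hc0 _) hk.symm).trans_le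
      (Finset.single_le_sum (f := fun i : ℕ => c (n - i * d)) (fun i _ => hc0 _) hk_mem)

lemma strideSum_pos_iff_le (hc : ∀ m < 0, c m = 0) (hc0 : ∀ m, 0 ≤ c m) (hd : 0 < d)
    {x l : ℤ} (hl : IsGreatest {b | c (x - b * d) ≠ 0} l) (b : ℤ) :
    0 < strideSum c d (x - b * d) ↔ b ≤ l := by
  rw [strideSum_pos_iff hc hc0 hd]
  constructor
  · rintro ⟨k, hk⟩
    have : b + k ≤ l := hl.2 (show c (x - (b + k) * d) ≠ 0 by rwa [add_mul, ← sub_sub])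
    omega
  · intro hb
    refine ⟨(l - b).toNat, ?_⟩
    rw [Int.toNat_of_nonneg (by omega)]
    have hmax : c (x - l * d) ≠ 0 := hl.1
    rwa [sub_sub, ← add_mul, add_sub_cancel]

end strideSum

lemma strideSum_coeffZ_eq {p q : ℕ} (hp : 0 < p) (hq : 0 < q) {A B : ℤ[X]}
    (h : A * xi q = B * xi p) : strideSum (coeffZ A) p = strideSum (coeffZ B) q := by
  have hpoly : A * X ^ q - A = B * X ^ p - B := by
    simp only [← mul_sub_one, xi] at h ⊢
    rw [← geom_sum_mul, ← geom_sum_mul, ← mul_assoc, ← mul_assoc, h]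
  have hcoeff (m : ℤ) : coeffZ A m - coeffZ A (m - q) = coeffZ B m - coeffZ B (m - p) := by
    have := congrArg (coeffZ · m) hpoly
    simp only [coeffZ_sub, coeffZ_mul_X_pow] at this
    linarith
  have hA := fun m => coeffZ_of_neg A (j := m)
  have hB := fun m => coeffZ_of_neg B (j := m)
  have hstep (n : ℤ) :
      strideSum (coeffZ A) p n - strideSum (coeffZ A) p (n - q) = coeffZ B n := by
    rw [← strideSum_comp_sub hA hp, ← strideSum_sub]
    simp only [hcoeff]
    rw [strideSum_sub, strideSum_comp_sub hB hp, strideSum_sub_strideSum hB hp]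
  exact eq_strideSum_of_sub_eq (fun n hn => strideSum_of_neg hA hn) hq hstep

lemma isGreatest_of_rev {P : ℕ → ℤ → Prop} {lam : ℕ → ℤ} {p : ℕ}
    (h : ∀ a < p, P a (lam (p - 1 - a)) ∧ ∀ b, P a b → b ≤ lam (p - 1 - a)) {j : ℕ} (hj : j < p) :
    IsGreatest {b | P (p - 1 - j) b} (lam j) := by
  have := h (p - 1 - j) (by omega)
  rw [show p - 1 - (p - 1 - j) = j by omega] at this
  exact ⟨this.1, this.2⟩

lemma lt_iff_lt_of_pos_iff_le {F : ℤ → ℤ} {p q i j : ℕ} {l m : ℤ} (hi : i < q) (hj : j < p)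
    (hl : ∀ b : ℤ, 0 < F ((p - 1 - j : ℕ) * q - b * p) ↔ b ≤ l)
    (hm : ∀ b : ℤ, 0 < F ((q - 1 - i : ℕ) * p - b * q) ↔ b ≤ m) :
    (i : ℤ) < l ↔ (j : ℤ) < m := by
  have hpt : ((p - 1 - j : ℕ) : ℤ) * q - (i + 1) * p = ((q - 1 - i : ℕ) : ℤ) * p - (j + 1) * q := by
    rw [Nat.cast_sub (by omega), Nat.cast_sub (by omega), Nat.cast_sub (by omega),
      Nat.cast_sub (by omega)]
    push_cast
    ring
  have := hl (i + 1)
  rw [hpt, hm (j + 1)] at this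
  omega

lemma card_filter_range_of_iff_lt {P : ℕ → Prop} [DecidablePred P] {p m : ℕ} (hm : m ≤ p)
    (h : ∀ j < p, P j ↔ j < m) : ((Finset.range p).filter P).card = m := by
  convert Finset.card_range m
  ext j
  simp only [Finset.mem_filter, Finset.mem_range]
  constructor
  · exact fun ⟨hj, hP⟩ => (h j hj).1 hP
  · exact fun hj => ⟨by omega, (h j (by omega)).2 hj⟩

theorem stmt8_general (p q : ℕ) (hp : 0 < p) (hq : 0 < q)
    (A B : Polynomial ℤ)
    (hA : ∀ n, 0 ≤ A.coeff n) (hB : ∀ n, 0 ≤ B.coeff n)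
    (hA0 : A.coeff 0 ≠ 0)
    (h : A * xi q = B * xi p)
    (lam mu : ℕ → ℤ)
    (hlam : ∀ a < p,
      coeffZ A ((a : ℤ) * q - lam (p - 1 - a) * p) ≠ 0 ∧
      ∀ b : ℤ, coeffZ A ((a : ℤ) * q - b * p) ≠ 0 → b ≤ lam (p - 1 - a))
    (hmu : ∀ a < q,
      coeffZ B ((a : ℤ) * p - mu (q - 1 - a) * q) ≠ 0 ∧
      ∀ b : ℤ, coeffZ B ((a : ℤ) * p - b * q) ≠ 0 → b ≤ mu (q - 1 - a)) :
    (∀ i : ℕ, i < q →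
        mu i = (((Finset.range p).filter fun j => (i : ℤ) < lam j).card : ℤ)) ∧
      (∀ i : ℕ, q ≤ i →
        ((Finset.range p).filter fun j => (i : ℤ) < lam j).card = 0) := by
  have hlam' (j : ℕ) (hj : j < p) :=
    isGreatest_of_rev (P := fun a b => coeffZ A (a * q - b * p) ≠ 0) (lam := lam) hlam hj
  have hmu' (i : ℕ) (hi : i < q) :=
    isGreatest_of_rev (P := fun a b => coeffZ B (a * p - b * q) ≠ 0) (lam := mu) hmu hi
  have lineA (j : ℕ) (hj : j < p) :=
    strideSum_pos_iff_le (fun _ => coeffZ_of_neg A) (coeffZ_nonneg hA) hp (hlam' j hj)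
  have lineB (i : ℕ) (hi : i < q) := strideSum_coeffZ_eq hp hq h ▸
    strideSum_pos_iff_le (fun _ => coeffZ_of_neg B) (coeffZ_nonneg hB) hq (hmu' i hi)
  have hmu_nonneg (i : ℕ) (hi : i < q) : 0 ≤ mu i := by
    refine (lineB i hi 0).1 ((strideSum_pos_iff (fun _ => coeffZ_of_neg A) (coeffZ_nonneg hA)
      hp _).2 ⟨q - 1 - i, ?_⟩)
    simpa [coeffZ] using hA0
  refine ⟨fun i hi => ?_, fun i hi => ?_⟩
  · have := hmu_nonneg i hi
    have := lt_of_coeffZ_ne_zero hp (Nat.sub_one_sub_lt_of_lt hi) (hmu' i hi).1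
    rw [card_filter_range_of_iff_lt (m := (mu i).toNat) (by omega) fun j hj => by
      rw [lt_iff_lt_of_pos_iff_le hi hj (lineA j hj) (lineB i hi)]; omega]
    omega
  · refine Finset.card_eq_zero.2 (Finset.filter_eq_empty_iff.2 fun j hj => ?_)
    have := lt_of_coeffZ_ne_zero hq (Nat.sub_one_sub_lt_of_lt (Finset.mem_range.1 hj))
      (hlam' j (Finset.mem_range.1 hj)).1
    omega

/-- With λ coming from the top terms of A (exponents aq - bp, 0 ≤ a < p) and
    μ from the top terms of B (exponents ap - bq, 0 ≤ a < q), the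
    partitions λ and μ are dual (conjugate): μ_i = #{j : λ_j > i}. -/
theorem stmt8 (p q : ℕ) (hp : 0 < p) (hq : 0 < q) (hpq : Nat.Coprime p q)
    (A B : Polynomial ℤ)
    (hA : ∀ n, 0 ≤ A.coeff n) (hB : ∀ n, 0 ≤ B.coeff n)
    (hA0 : A.coeff 0 ≠ 0) (hB0 : B.coeff 0 ≠ 0)
    (h : A * xi q = B * xi p)
    (lam mu : ℕ → ℤ)
    (hlam : ∀ a < p,
      coeffZ A ((a : ℤ) * q - lam (p - 1 - a) * p) ≠ 0 ∧
      ∀ b : ℤ, coeffZ A ((a : ℤ) * q - b * p) ≠ 0 → b ≤ lam (p - 1 - a))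
    (hmu : ∀ a < q,
      coeffZ B ((a : ℤ) * p - mu (q - 1 - a) * q) ≠ 0 ∧
      ∀ b : ℤ, coeffZ B ((a : ℤ) * p - b * q) ≠ 0 → b ≤ mu (q - 1 - a)) :
    (∀ i : ℕ, i < q →
        mu i = (((Finset.range p).filter fun j => (i : ℤ) < lam j).card : ℤ)) ∧
      (∀ i : ℕ, q ≤ i →
        ((Finset.range p).filter fun j => (i : ℤ) < lam j).card = 0) :=
  stmt8_general p q hp hq A B hA hB hA0 h lam mu hlam hmu
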